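/- arXiv:1804.07560 — 4 statements merged into one kernel-verified Lean document; each statement's English description precedes it below -/
import Mathlib

section
/- Let d ≥ 0 and λ_0,...,λ_d be integers with Σ_{i=0}^d λ_i > 0. Then for every infinite set A ⊆ ℕ, limsup_{n→∞} |Σ_{i=0}^d λ_i·R_A(n-i)| ≥ limsup_{n→∞} (Σ_{i=0}^d λ_i)/(2(d+1)^2) · (B(A,λ,n)/√n)^2. -/
open Filter Finset
open scoped Classical

/-- Number of ordered pairs (a,a') with a,a' ∈ A and a+a' = n. -/
noncomputable def Rf (A : Set ℕ) (n : ℕ) : ℕ :=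
  Nat.card {p : ℕ × ℕ | p.1 ∈ A ∧ p.2 ∈ A ∧ p.1 + p.2 = n}

/-- Rf extended to ℤ by 0 on negatives. -/
noncomputable def Rz (A : Set ℕ) (k : ℤ) : ℕ :=
  if 0 ≤ k then Rf A k.toNat else 0

/-- Counting function A(n) = #{a ∈ A : a ≤ n}. -/
noncomputable def cnt (A : Set ℕ) (n : ℕ) : ℕ :=
  Nat.card {a : ℕ | a ∈ A ∧ a ≤ n}

/-- Characteristic function of A, extended by 0 to negative integers. -/
noncomputable def chi (A : Set ℕ) (k : ℤ) : ℤ :=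
  if 0 ≤ k ∧ k.toNat ∈ A then 1 else 0

/-- B(A, λ, n) = #{m ≤ n : ∑_{i=0}^d λ_i χ_A(m-i) ≠ 0}. -/
noncomputable def Bf (A : Set ℕ) (lam : ℕ → ℤ) (d : ℕ) (n : ℕ) : ℕ :=
  Nat.card {m : ℕ | m ≤ n ∧ ∑ i ∈ Finset.range (d+1), lam i * chi A ((m : ℤ) - i) ≠ 0}

/-!
Write `s n = ∑ λᵢ R_A(n - i)`, `S = ∑ λᵢ`, `σ = ∑ |λᵢ|`, `A(n) = #{a ∈ A : a ≤ n}` and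
`D(K) = ∑_{m < K} R_A(m)`. Summing `s` over `n < N` gives `∑ λᵢ D(N - i)`, and since `D(N - i)` lies
between `D(N - d)` and `D(N - d) + d A(N)`, this is at least `S D(N - d) - σ d A(N)`. If `|s n| ≤ L`
eventually, the partial sums are at most `C + L N`; together with `D(2n + 1) ≥ A(n)²` this gives
`S A(n)² ≤ 2 L n + O(1) + σ d A(2n + d + 1)`. As `A(m) ≤ m + 1`, this first yields `A(n)² = O(n)`,
hence `A(n) = o(n)`, and fed back it gives `S A(n)² ≤ (2L + ε) n` eventually. Finally
`B(A, λ, n) ≤ (d + 1) A(n)`.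
-/

-- The `D(K)` above, counted directly as pairs with sum `< K`.
noncomputable def Rcum (A : Set ℕ) (K : ℕ) : ℕ :=
  Nat.card {p : ℕ × ℕ | p.1 ∈ A ∧ p.2 ∈ A ∧ p.1 + p.2 < K}

section Counting

variable (A : Set ℕ)

lemma finite_setOf_add_lt (K : ℕ) : {p : ℕ × ℕ | p.1 ∈ A ∧ p.2 ∈ A ∧ p.1 + p.2 < K}.Finite :=
  ((Set.finite_Iio K).prod (Set.finite_Iio K)).subset fun p ⟨_, _, hp⟩ =>
    ⟨show p.1 < K by omega, show p.2 < K by omega⟩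

lemma finite_setOf_add_eq (m : ℕ) : {p : ℕ × ℕ | p.1 ∈ A ∧ p.2 ∈ A ∧ p.1 + p.2 = m}.Finite :=
  (finite_setOf_add_lt A (m + 1)).subset fun _ ⟨h₁, h₂, hp⟩ => ⟨h₁, h₂, by omega⟩

lemma finite_setOf_mem_le (n : ℕ) : {a : ℕ | a ∈ A ∧ a ≤ n}.Finite :=
  (Set.finite_Iic n).subset fun _ h => h.2

@[simp]
lemma Rcum_zero : Rcum A 0 = 0 := by
  simp [Rcum]

lemma Rcum_succ (K : ℕ) : Rcum A (K + 1) = Rcum A K + Rf A K := by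
  have hunion : {p : ℕ × ℕ | p.1 ∈ A ∧ p.2 ∈ A ∧ p.1 + p.2 < K + 1} =
      {p : ℕ × ℕ | p.1 ∈ A ∧ p.2 ∈ A ∧ p.1 + p.2 < K} ∪
        {p : ℕ × ℕ | p.1 ∈ A ∧ p.2 ∈ A ∧ p.1 + p.2 = K} := by
    ext p
    simp only [Set.mem_union, Set.mem_ofPred_eq, Nat.lt_succ_iff_lt_or_eq, and_or_left]
  have hdisj : Disjoint {p : ℕ × ℕ | p.1 ∈ A ∧ p.2 ∈ A ∧ p.1 + p.2 < K}
      {p : ℕ × ℕ | p.1 ∈ A ∧ p.2 ∈ A ∧ p.1 + p.2 = K} :=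
    Set.disjoint_left.2 fun _ h h' => by simp only [Set.mem_ofPred_eq] at h h'; omega
  rw [Rcum, Rcum, Rf, hunion, Nat.card_coe_set_eq, Nat.card_coe_set_eq, Nat.card_coe_set_eq,
    Set.ncard_union_eq hdisj (finite_setOf_add_lt A K) (finite_setOf_add_eq A K)]

lemma Rcum_mono {K M : ℕ} (h : K ≤ M) : Rcum A K ≤ Rcum A M := by
  induction M, h using Nat.le_induction with
  | base => rfl
  | succ M _ ih => rw [Rcum_succ]; omega

lemma cnt_mono {m n : ℕ} (h : m ≤ n) : cnt A m ≤ cnt A n := by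
  rw [cnt, cnt, Nat.card_coe_set_eq, Nat.card_coe_set_eq]
  exact Set.ncard_le_ncard (fun a ha => ⟨ha.1, ha.2.trans h⟩) (finite_setOf_mem_le A n)

lemma cnt_le (n : ℕ) : cnt A n ≤ n + 1 := by
  rw [cnt, Nat.card_coe_set_eq, ← Set.ncard_Iic_nat]
  exact Set.ncard_le_ncard (fun _ h => h.2) (Set.finite_Iic n)

lemma Rf_le_cnt (m : ℕ) : Rf A m ≤ cnt A m := by
  rw [Rf, cnt, Nat.card_coe_set_eq, Nat.card_coe_set_eq]
  refine Set.ncard_le_ncard_of_injOn Prod.fst (fun p hp => ⟨hp.1, hp.2.2 ▸ Nat.le_add_right _ _⟩)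
    ?_ (finite_setOf_mem_le A m)
  intro p ⟨_, _, hp⟩ q ⟨_, _, hq⟩ hpq
  exact Prod.ext hpq (by omega)

lemma Rcum_le_add_mul_cnt {K M : ℕ} (h : K ≤ M) : Rcum A M ≤ Rcum A K + (M - K) * cnt A M := by
  induction M, h using Nat.le_induction with
  | base => simp
  | succ M hKM ih =>
    have hcnt := cnt_mono A (Nat.le_succ M)
    have hRf := Rf_le_cnt A M
    rw [Rcum_succ, Nat.sub_add_comm hKM, add_one_mul]
    nlinarith

lemma sq_cnt_le_Rcum (n : ℕ) : cnt A n ^ 2 ≤ Rcum A (2 * n + 1) := by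
  rw [Rcum, cnt, Nat.card_coe_set_eq, Nat.card_coe_set_eq, sq, ← Set.ncard_prod]
  exact Set.ncard_le_ncard (fun p ⟨⟨h₁, h₁'⟩, h₂, h₂'⟩ => ⟨h₁, h₂, by omega⟩)
    (finite_setOf_add_lt A _)

lemma sum_range_Rz_sub (i N : ℕ) : ∑ n ∈ range N, Rz A ((n : ℤ) - i) = Rcum A (N - i) := by
  induction N with
  | zero => simp
  | succ N ih =>
    rw [sum_range_succ, ih]
    rcases le_or_gt i N with h | h
    · rw [Nat.sub_add_comm h, Rcum_succ, Rz, if_pos (by omega)]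
      congr 2
      omega
    · rw [Rz, if_neg (by omega), Nat.sub_eq_zero_of_le h.le, Nat.sub_eq_zero_of_le h, add_zero]

end Counting

lemma Bf_le (A : Set ℕ) (lam : ℕ → ℤ) (d n : ℕ) : Bf A lam d n ≤ (d + 1) * cnt A n := by
  have hsub : {m : ℕ | m ≤ n ∧ ∑ i ∈ range (d + 1), lam i * chi A ((m : ℤ) - i) ≠ 0} ⊆
      ⋃ i ∈ range (d + 1), (· + i) '' {a : ℕ | a ∈ A ∧ a ≤ n} := by
    rintro m ⟨hmn, hne⟩
    obtain ⟨i, hi, hne⟩ := exists_ne_zero_of_sum_ne_zero hne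
    have hchi : 0 ≤ (m : ℤ) - i ∧ ((m : ℤ) - i).toNat ∈ A := by
      by_contra h
      exact hne (by rw [chi, if_neg h, mul_zero])
    have htoNat : ((m : ℤ) - i).toNat = m - i := by omega
    rw [htoNat] at hchi
    exact Set.mem_biUnion hi ⟨m - i, ⟨hchi.2, by omega⟩, by simp only; omega⟩
  have hfin : (⋃ i ∈ range (d + 1), (· + i) '' {a : ℕ | a ∈ A ∧ a ≤ n}).Finite :=
    (finite_toSet _).biUnion fun i _ => (finite_setOf_mem_le A n).image _
  calc Bf A lam d n
      ≤ (⋃ i ∈ range (d + 1), (· + i) '' {a : ℕ | a ∈ A ∧ a ≤ n}).ncard := by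
        rw [Bf, Nat.card_coe_set_eq]
        exact Set.ncard_le_ncard hsub hfin
    _ ≤ ∑ i ∈ range (d + 1), ((· + i) '' {a : ℕ | a ∈ A ∧ a ≤ n}).ncard :=
        set_ncard_biUnion_le _ _
    _ ≤ ∑ _i ∈ range (d + 1), cnt A n :=
        sum_le_sum fun i _ => Set.ncard_image_le (finite_setOf_mem_le A n)
    _ = (d + 1) * cnt A n := by rw [sum_const, card_range, smul_eq_mul]

lemma sub_abs_mul_le_mul {a y z w : ℝ} (hyz : y ≤ z) (hzw : z ≤ y + w) :
    a * y - |a| * w ≤ a * z := by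
  have h : |a * (z - y)| ≤ |a| * w := by
    rw [abs_mul, abs_of_nonneg (sub_nonneg.2 hyz)]
    exact mul_le_mul_of_nonneg_left (by linarith) (abs_nonneg a)
  linarith [neg_abs_le (a * (z - y))]

lemma sum_range_weighted_Rz (A : Set ℕ) (lam : ℕ → ℤ) (d N : ℕ) :
    ∑ n ∈ range N, ∑ i ∈ range (d + 1), (lam i : ℝ) * Rz A ((n : ℤ) - i) =
      ∑ i ∈ range (d + 1), (lam i : ℝ) * Rcum A (N - i) := by
  rw [sum_comm]
  refine sum_congr rfl fun i _ => ?_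
  rw [← mul_sum, ← Nat.cast_sum, sum_range_Rz_sub]

lemma sum_mul_Rcum_le_sum_weighted_Rz (A : Set ℕ) (lam : ℕ → ℤ) {d N : ℕ} (hdN : d ≤ N) :
    (∑ i ∈ range (d + 1), (lam i : ℝ)) * Rcum A (N - d) -
        (∑ i ∈ range (d + 1), |(lam i : ℝ)|) * (d * cnt A N) ≤
      ∑ n ∈ range N, ∑ i ∈ range (d + 1), (lam i : ℝ) * Rz A ((n : ℤ) - i) := by
  rw [sum_range_weighted_Rz, sum_mul, sum_mul, ← sum_sub_distrib]
  refine sum_le_sum fun i hi => ?_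
  have hid := mem_range.1 hi
  refine sub_abs_mul_le_mul ?_ ?_
  · exact_mod_cast Rcum_mono A (by omega)
  · have h := Rcum_le_add_mul_cnt A (show N - d ≤ N - i by omega)
    have hcnt : (N - i - (N - d)) * cnt A (N - i) ≤ d * cnt A N :=
      Nat.mul_le_mul (by omega) (cnt_mono A (by omega))
    exact_mod_cast h.trans (by omega)

lemma mul_sq_cnt_le_sum_weighted_Rz (A : Set ℕ) (lam : ℕ → ℤ) (d n : ℕ)
    (hS : 0 ≤ ∑ i ∈ range (d + 1), (lam i : ℝ)) :
    (∑ i ∈ range (d + 1), (lam i : ℝ)) * cnt A n ^ 2 ≤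
      ∑ m ∈ range (2 * n + (d + 1)), ∑ i ∈ range (d + 1), (lam i : ℝ) * Rz A ((m : ℤ) - i) +
        (∑ i ∈ range (d + 1), |(lam i : ℝ)|) * d * cnt A (2 * n + (d + 1)) := by
  have h := sum_mul_Rcum_le_sum_weighted_Rz A lam (show d ≤ 2 * n + (d + 1) by omega)
  rw [show 2 * n + (d + 1) - d = 2 * n + 1 by omega] at h
  have hsq : (cnt A n : ℝ) ^ 2 ≤ Rcum A (2 * n + 1) := by exact_mod_cast sq_cnt_le_Rcum A n
  nlinarith [mul_le_mul_of_nonneg_left hsq hS]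

open Asymptotics

lemma exists_sum_range_le_of_eventually_le {s : ℕ → ℝ} {L : ℝ} (h : ∀ᶠ n in atTop, s n ≤ L) :
    ∃ C, ∀ᶠ N in atTop, ∑ n ∈ range N, s n ≤ C + L * N := by
  obtain ⟨n₀, hn₀⟩ := eventually_atTop.1 h
  refine ⟨∑ n ∈ range n₀, s n - L * n₀, eventually_atTop.2 ⟨n₀, fun N hN => ?_⟩⟩
  have htail : ∑ n ∈ Ico n₀ N, s n ≤ (N - n₀ : ℕ) • L := by
    simpa using sum_le_card_nsmul _ _ L fun n hn => hn₀ n (mem_Ico.1 hn).1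
  rw [← sum_range_add_sum_Ico _ hN]
  rw [nsmul_eq_mul, Nat.cast_sub hN] at htail
  linarith

lemma isBigO_sq_of_mul_sq_le {x : ℕ → ℝ} {S a b c : ℝ} {k : ℕ} (hS : 0 < S)
    (hx0 : ∀ n, 0 ≤ x n) (hx1 : ∀ n, x n ≤ n + 1)
    (hx : ∀ᶠ n in atTop, S * x n ^ 2 ≤ a * n + b + c * x (2 * n + k)) :
    (fun n => x n ^ 2) =O[atTop] (fun n => (n : ℝ)) := by
  refine IsBigO.of_bound ((|a| + |b| + |c| * (k + 3)) / S) ?_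
  filter_upwards [hx, eventually_ge_atTop 1] with n hn hn1
  have hn1 : (1 : ℝ) ≤ n := by exact_mod_cast hn1
  have ha : a * n ≤ |a| * n := mul_le_mul_of_nonneg_right (le_abs_self a) (by positivity)
  have hb : b ≤ |b| * n := (le_abs_self b).trans (le_mul_of_one_le_right (abs_nonneg b) hn1)
  have hc : c * x (2 * n + k) ≤ |c| * ((k + 3) * n) := by
    have hxk : x (2 * n + k) ≤ (k + 3) * n := by
      have := hx1 (2 * n + k)
      push_cast at this
      nlinarith
    calc c * x (2 * n + k) ≤ |c| * x (2 * n + k) :=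
          mul_le_mul_of_nonneg_right (le_abs_self c) (hx0 _)
      _ ≤ |c| * ((k + 3) * n) := mul_le_mul_of_nonneg_left hxk (abs_nonneg c)
  rw [Real.norm_of_nonneg (sq_nonneg _), Real.norm_natCast, div_mul_eq_mul_div, le_div_iff₀ hS]
  linarith

lemma isLittleO_of_sq_isBigO {x : ℕ → ℝ} (hx : (fun n => x n ^ 2) =O[atTop] (fun n => (n : ℝ))) :
    x =o[atTop] (fun n => (n : ℝ)) := by
  have hsq : (fun n : ℕ => (n : ℝ)) =o[atTop] (fun n => (n : ℝ) ^ 2) := by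
    have := (isLittleO_pow_pow_atTop_of_lt (𝕜 := ℝ) one_lt_two).comp_tendsto
      tendsto_natCast_atTop_atTop
    simpa only [Function.comp_def, pow_one] using this
  exact IsLittleO.of_pow (n := 2) (hx.trans_isLittleO hsq) two_ne_zero

lemma eventually_mul_sq_le_of_mul_sq_le {x : ℕ → ℝ} {S a b c ε : ℝ} {k : ℕ} (hS : 0 < S)
    (hε : 0 < ε) (hx0 : ∀ n, 0 ≤ x n) (hx1 : ∀ n, x n ≤ n + 1)
    (hx : ∀ᶠ n in atTop, S * x n ^ 2 ≤ a * n + b + c * x (2 * n + k)) :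
    ∀ᶠ n in atTop, S * x n ^ 2 ≤ (a + ε) * n := by
  have hxo := isLittleO_of_sq_isBigO (isBigO_sq_of_mul_sq_le hS hx0 hx1 hx)
  have hshift : Tendsto (fun n => 2 * n + k) atTop atTop :=
    tendsto_atTop_mono (fun n => show n ≤ 2 * n + k by omega) tendsto_id
  have hlin : (fun n : ℕ => ((2 * n + k : ℕ) : ℝ)) =O[atTop] (fun n => (n : ℝ)) := by
    refine IsBigO.of_bound (k + 2) ?_
    filter_upwards [eventually_ge_atTop 1] with n hn
    have hn : (1 : ℝ) ≤ n := by exact_mod_cast hn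
    simp only [Real.norm_natCast]
    push_cast
    nlinarith
  have hb : (fun _ : ℕ => b) =o[atTop] (fun n => (n : ℝ)) :=
    isLittleO_const_left.2 <| Or.inr <| tendsto_norm_atTop_atTop.comp tendsto_natCast_atTop_atTop
  have herr : (fun n => b + c * x (2 * n + k)) =o[atTop] (fun n => (n : ℝ)) :=
    hb.add (((hxo.comp_tendsto hshift).trans_isBigO hlin).const_mul_left c)
  filter_upwards [hx, herr.bound hε] with n hn hbound
  rw [Real.norm_natCast, Real.norm_eq_abs] at hbound
  linarith [le_abs_self (b + c * x (2 * n + k))]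

lemma mul_Bf_div_sqrt_sq_le (A : Set ℕ) (lam : ℕ → ℤ) (d n : ℕ) {S : ℝ} (hS : 0 ≤ S) :
    S / (2 * (d + 1) ^ 2) * ((Bf A lam d n : ℝ) / Real.sqrt n) ^ 2 ≤ S * cnt A n ^ 2 / (2 * n) := by
  have hB : (Bf A lam d n : ℝ) ≤ (d + 1) * cnt A n := by exact_mod_cast Bf_le A lam d n
  rw [div_pow, Real.sq_sqrt (Nat.cast_nonneg n)]
  calc S / (2 * (d + 1) ^ 2) * ((Bf A lam d n : ℝ) ^ 2 / n)
      ≤ S / (2 * (d + 1) ^ 2) * (((d + 1) * cnt A n) ^ 2 / n) := by gcongr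
    _ = S * cnt A n ^ 2 / (2 * n) := by field_simp

lemma eventually_mul_Bf_div_sqrt_sq_le (A : Set ℕ) (lam : ℕ → ℤ) (d : ℕ)
    (hsum : 0 < ∑ i ∈ range (d + 1), lam i) {L L' : ℝ}
    (hL : ∀ᶠ n : ℕ in atTop, |∑ i ∈ range (d + 1), (lam i : ℝ) * Rz A ((n : ℤ) - i)| ≤ L)
    (hLL' : L < L') :
    ∀ᶠ n : ℕ in atTop, ((∑ i ∈ range (d + 1), lam i : ℤ) : ℝ) / (2 * (d + 1) ^ 2) *
      ((Bf A lam d n : ℝ) / Real.sqrt n) ^ 2 ≤ L' := by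
  set S : ℝ := ∑ i ∈ range (d + 1), (lam i : ℝ)
  have hS : 0 < S := by simpa [S] using (Int.cast_pos (R := ℝ)).2 hsum
  obtain ⟨C, hC⟩ :=
    exists_sum_range_le_of_eventually_le (hL.mono fun n h => (le_abs_self _).trans h)
  have hshift : Tendsto (fun n => 2 * n + (d + 1)) atTop atTop :=
    tendsto_atTop_mono (fun n => show n ≤ 2 * n + (d + 1) by omega) tendsto_id
  have hcnt : ∀ᶠ n : ℕ in atTop, S * (cnt A n : ℝ) ^ 2 ≤ 2 * L * n + (C + L * (d + 1)) +
      (∑ i ∈ range (d + 1), |(lam i : ℝ)|) * d * cnt A (2 * n + (d + 1)) := by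
    filter_upwards [hshift.eventually hC] with n hn
    have := mul_sq_cnt_le_sum_weighted_Rz A lam d n hS.le
    push_cast at hn
    linarith
  have hε : 0 < 2 * (L' - L) := by linarith
  filter_upwards [eventually_mul_sq_le_of_mul_sq_le hS hε (fun n => Nat.cast_nonneg _)
    (fun n => by exact_mod_cast cnt_le A n) hcnt, eventually_gt_atTop 0] with n hn hn0
  have hn0 : (0 : ℝ) < 2 * n := by positivity
  push_cast
  calc S / (2 * (d + 1) ^ 2) * ((Bf A lam d n : ℝ) / Real.sqrt n) ^ 2
      ≤ S * cnt A n ^ 2 / (2 * n) := mul_Bf_div_sqrt_sq_le A lam d n hS.le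
    _ ≤ L' := by rw [div_le_iff₀ hn0]; linarith

theorem stmt4_general (d : ℕ) (lam : ℕ → ℤ)
    (hsum : 0 < ∑ i ∈ Finset.range (d + 1), lam i)
    (A : Set ℕ) :
    limsup (fun n : ℕ =>
        ((|∑ i ∈ Finset.range (d + 1), (lam i : ℝ) * Rz A ((n : ℤ) - i)| : ℝ) : EReal)) atTop
      ≥ limsup (fun n : ℕ =>
        ((((∑ i ∈ Finset.range (d + 1), lam i : ℤ) : ℝ) / (2 * (d + 1) ^ 2) *
          ((Bf A lam d n : ℝ) / Real.sqrt n) ^ 2 : ℝ) : EReal)) atTop := by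
  rw [ge_iff_le, ← EReal.le_of_forall_lt_iff_le]
  intro z hz
  obtain ⟨L, hL, hLz⟩ := EReal.exists_between_coe_real hz
  have hbound := (eventually_lt_of_limsup_lt hL).mono fun n hn => (EReal.coe_lt_coe_iff.1 hn).le
  exact limsup_le_of_le (by isBoundedDefault) <|
    (eventually_mul_Bf_div_sqrt_sq_le A lam d hsum hbound (EReal.coe_lt_coe_iff.1 hLz)).mono
      fun n hn => EReal.coe_le_coe_iff.2 hn

theorem stmt4 (d : ℕ) (lam : ℕ → ℤ)
    (hsum : 0 < ∑ i ∈ Finset.range (d + 1), lam i)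
    (A : Set ℕ) (hA : A.Infinite) :
    limsup (fun n : ℕ =>
        ((|∑ i ∈ Finset.range (d + 1), (lam i : ℝ) * Rz A ((n : ℤ) - i)| : ℝ) : EReal)) atTop
      ≥ limsup (fun n : ℕ =>
        ((((∑ i ∈ Finset.range (d + 1), lam i : ℤ) : ℝ) / (2 * (d + 1) ^ 2) *
          ((Bf A lam d n : ℝ) / Real.sqrt n) ^ 2 : ℝ) : EReal)) atTop :=
  stmt4_general d lam hsum A
end

section
/- Let λ_0,...,λ_d be integers, not all zero, with Σ_{i=0}^d λ_i = 0. Then for every infinite set A ⊆ ℕ, limsup_{n→∞} |Σ_{i=0}^d λ_i·R_A(n-i)| ≥ limsup_{n→∞} (√2/(e^2·Σ_{i=0}^d |λ_i|))·B(A,λ,n)/√n. -/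
open Filter Finset
open scoped Classical

/-!
Put `ρ = e^{-1/N}`, `g(k) = ρ^k χ_A(k)` and `T(m) = ρ^m t(m)` with `t(m) = ∑ λ_i χ_A(m - i)`: these
are the coefficients of `f(z)` and of `f(z) ∑ λ_i z^i` at `z = ρ e(α)`, and the convolution `T * g`
is `n ↦ ρ^n S(n)` with `S(n) = ∑ λ_i R_A(n - i)`. Since `t` is integer-valued,
`e^{-2} B(A, λ, N) ≤ ∑ T(m)^2`. Writing `T(m) = ∑ λ_i ρ^i g(m - i)` turns `∑ T(m)^2` into
`∑ λ_i ρ^i w(i)`, where `w` is the correlation of `T` and `g`. Parseval (here a rearrangement of a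
triple sum) gives `‖w‖₂ = ‖T * g‖₂`, hence `∑ T(m)^2 ≤ (∑ |λ_i|) ‖T * g‖₂`. If `|S(n)| ≤ K` for
large `n`, then `‖T * g‖₂^2 ≤ O(1) + K^2 / (1 - ρ^2) ≤ O(1) + K^2 e^{2/N} N / 2`, and letting
`N → ∞` gives the constant `√2 / e^2`.
-/

lemma abs_le_tsum_abs {ι : Type*} {f : ι → ℝ} (hf : Summable f) (k : ι) : |f k| ≤ ∑' k, |f k| :=
  hf.abs.le_tsum k fun _ _ => abs_nonneg _

section IntConvolution

variable {f g : ℤ → ℝ}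

noncomputable def intConv (f g : ℤ → ℝ) (n : ℤ) : ℝ := ∑' a, f (n - a) * g a

noncomputable def intCorr (f g : ℤ → ℝ) (i : ℤ) : ℝ := ∑' a, f (a + i) * g a

lemma intConv_zpow_mul {ρ : ℝ} (hρ : ρ ≠ 0) (f g : ℤ → ℝ) (n : ℤ) :
    intConv (fun k => ρ ^ k * f k) (fun k => ρ ^ k * g k) n = ρ ^ n * intConv f g n := by
  rw [intConv, intConv, ← tsum_mul_left]
  refine tsum_congr fun a => ?_
  rw [show ρ ^ n = ρ ^ (n - a) * ρ ^ a by rw [← zpow_add₀ hρ, sub_add_cancel]]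
  ring

lemma intCorr_eq_intConv_neg (f g : ℤ → ℝ) : intCorr f g = intConv f (fun a => g (-a)) := by
  ext i
  rw [intConv, ← (Equiv.neg ℤ).tsum_eq]
  simp [intCorr, add_comm]

lemma tsum_mul_sub_eq_intCorr (f g : ℤ → ℝ) (i : ℤ) :
    ∑' m, f m * g (m - i) = intCorr f g i := by
  rw [intCorr, ← (Equiv.addRight i).tsum_eq]
  simp

/-- The summand of `∑' n, intConv f g n ^ 2`, written as a sum over `ℤ × ℤ × ℤ`. -/
def convSqTerm (f g : ℤ → ℝ) (q : ℤ × ℤ × ℤ) : ℝ :=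
  f (q.1 - q.2.1) * g q.2.1 * (f (q.1 - q.2.2) * g q.2.2)

lemma summable_convSqTerm (hf : Summable f) (hg : Summable g) : Summable (convSqTerm f g) := by
  set M := ∑' k, |f k|
  have hgg : Summable fun p : ℤ × ℤ => |g p.1| * |g p.2| :=
    hg.abs.mul_of_nonneg hg.abs (fun _ => abs_nonneg _) (fun _ => abs_nonneg _)
  have hprod : Summable fun q : ℤ × ℤ × ℤ => |f q.1| * (|g q.2.1| * |g q.2.2|) :=
    hf.abs.mul_of_nonneg hgg (fun _ => abs_nonneg _) (fun _ => by positivity)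
  let shear : ℤ × ℤ × ℤ ≃ ℤ × ℤ × ℤ :=
    { toFun q := (q.1 - q.2.1, q.2)
      invFun q := (q.1 + q.2.1, q.2)
      left_inv q := by simp
      right_inv q := by simp }
  have hdom := (shear.summable_iff.2 hprod).mul_left M
  refine hdom.of_norm_bounded fun q => ?_
  simp only [convSqTerm, Function.comp_apply, Real.norm_eq_abs, abs_mul, shear, Equiv.coe_fn_mk]
  calc _ = |f (q.1 - q.2.1)| * (|g q.2.1| * |g q.2.2|) * |f (q.1 - q.2.2)| := by ring
    _ ≤ |f (q.1 - q.2.1)| * (|g q.2.1| * |g q.2.2|) * M :=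
        mul_le_mul_of_nonneg_left (abs_le_tsum_abs hf _) (by positivity)
    _ = _ := by ring

lemma hasSum_sq_intConv (hf : Summable f) (hg : Summable g) :
    HasSum (fun n => intConv f g n ^ 2) (∑' q, convSqTerm f g q) := by
  refine (summable_convSqTerm hf hg).hasSum.prod_fiberwise fun n => ?_
  have hu : Summable fun a => ‖f (n - a) * g a‖ := by
    refine (hg.norm.mul_left (∑' k, |f k|)).of_nonneg_of_le (fun _ => norm_nonneg _) fun a => ?_
    rw [norm_mul, Real.norm_eq_abs (f _)]
    exact mul_le_mul_of_nonneg_right (abs_le_tsum_abs hf _) (norm_nonneg _)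
  rw [sq, intConv, tsum_mul_tsum_of_summable_norm hu hu]
  exact (summable_mul_of_summable_norm hu hu).hasSum

/-- On the Fourier side, reflecting `g` only conjugates `ĝ`, so `‖f * g‖₂` is unchanged. -/
lemma tsum_convSqTerm_neg (f g : ℤ → ℝ) :
    ∑' q, convSqTerm f (fun a => g (-a)) q = ∑' q, convSqTerm f g q := by
  have hinv : Function.Involutive fun q : ℤ × ℤ × ℤ =>
      (q.1 - q.2.1 - q.2.2, -q.2.2, -q.2.1) := by
    intro q; ext <;> simp
  rw [← (hinv.toPerm _).tsum_eq]
  refine tsum_congr fun q => ?_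
  simp only [convSqTerm, Function.Involutive.coe_toPerm, neg_neg]
  ring_nf

lemma hasSum_sq_intCorr (hf : Summable f) (hg : Summable g) :
    HasSum (fun i => intCorr f g i ^ 2) (∑' n, intConv f g n ^ 2) := by
  rw [intCorr_eq_intConv_neg, (hasSum_sq_intConv hf hg).tsum_eq, ← tsum_convSqTerm_neg]
  exact hasSum_sq_intConv hf (hg.comp_injective neg_injective)

end IntConvolution

section Indicator

variable (A : Set ℕ)

lemma chi_of_neg {k : ℤ} (hk : k < 0) : chi A k = 0 :=
  if_neg fun h => by omega

lemma chi_natCast (a : ℕ) : chi A a = if a ∈ A then 1 else 0 := by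
  simp [chi]

lemma chi_nonneg (k : ℤ) : (0 : ℝ) ≤ chi A k := by
  unfold chi; split_ifs <;> norm_num

lemma chi_le_one (k : ℤ) : (chi A k : ℝ) ≤ 1 := by
  unfold chi; split_ifs <;> norm_num

lemma chi_sub_mul_chi_eq_zero {k a : ℤ} (h : a < 0 ∨ k < a) :
    (chi A (k - a) : ℝ) * chi A a = 0 := by
  rcases h with h | h
  · simp [chi_of_neg A h]
  · simp [chi_of_neg A (sub_neg.2 h)]

lemma summable_chi_sub_mul_chi (k : ℤ) : Summable fun a => (chi A (k - a) : ℝ) * chi A a :=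
  summable_of_ne_finset_zero (s := Icc 0 k) fun a ha =>
    chi_sub_mul_chi_eq_zero A (by rw [mem_Icc] at ha; omega)

lemma Rf_eq_sum (n : ℕ) :
    Rf A n = ∑ j ∈ range (n + 1), if j ∈ A ∧ n - j ∈ A then 1 else 0 := by
  have hset : {p : ℕ × ℕ | p.1 ∈ A ∧ p.2 ∈ A ∧ p.1 + p.2 = n}
      = ↑((antidiagonal n).filter fun p => p.1 ∈ A ∧ p.2 ∈ A) := by
    ext p; simp only [Set.mem_ofPred_eq, coe_filter, HasAntidiagonal.mem_antidiagonal]; tauto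
  rw [Rf, hset, Nat.card_coe_set_eq, Set.ncard_coe_finset, card_filter,
    Nat.sum_antidiagonal_eq_sum_range_succ_mk]

lemma Rz_eq_intConv (k : ℤ) :
    (Rz A k : ℝ) = intConv (fun k => (chi A k : ℝ)) (fun k => (chi A k : ℝ)) k := by
  rcases lt_or_ge k 0 with hk | hk
  · rw [Rz, if_neg hk.not_ge, intConv,
      tsum_congr fun a => chi_sub_mul_chi_eq_zero A (by omega), tsum_zero, Nat.cast_zero]
  lift k to ℕ using hk
  rw [intConv, tsum_eq_sum (s := (range (k + 1)).map Nat.castEmbedding), sum_map]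
  · simp only [Rz, Nat.cast_nonneg, if_true, Int.toNat_natCast, Rf_eq_sum, Nat.cast_sum]
    refine sum_congr rfl fun j hj => ?_
    rw [mem_range] at hj
    rw [Nat.castEmbedding_apply, ← Nat.cast_sub (by omega), chi_natCast, chi_natCast]
    split_ifs <;> simp_all
  · intro a ha
    refine chi_sub_mul_chi_eq_zero A ?_
    by_contra! h
    exact ha (mem_map.2 ⟨a.toNat, mem_range.2 (by omega), by simp [h.1]⟩)

end Indicator

section Combination

variable (A : Set ℕ) (lam : ℕ → ℤ) (d : ℕ)

noncomputable def chiComb (m : ℤ) : ℤ := ∑ i ∈ range (d + 1), lam i * chi A (m - i)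

noncomputable def repComb (n : ℤ) : ℝ := ∑ i ∈ range (d + 1), (lam i : ℝ) * Rz A (n - i)

lemma chiComb_of_neg {m : ℤ} (hm : m < 0) : chiComb A lam d m = 0 :=
  sum_eq_zero fun i _ => by rw [chi_of_neg A (by omega), mul_zero]

lemma repComb_of_neg {n : ℤ} (hn : n < 0) : repComb A lam d n = 0 :=
  sum_eq_zero fun i _ => by rw [Rz, if_neg (by omega), Nat.cast_zero, mul_zero]

lemma abs_chiComb_le (m : ℤ) :
    |(chiComb A lam d m : ℝ)| ≤ ∑ i ∈ range (d + 1), |(lam i : ℝ)| := by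
  rw [chiComb, Int.cast_sum]
  refine (abs_sum_le_sum_abs _ _).trans (sum_le_sum fun i _ => ?_)
  rw [Int.cast_mul, abs_mul, abs_of_nonneg (chi_nonneg A _)]
  exact mul_le_of_le_one_right (abs_nonneg _) (chi_le_one A _)

lemma Bf_eq_card (N : ℕ) :
    Bf A lam d N = #((range (N + 1)).filter fun m : ℕ => chiComb A lam d m ≠ 0) := by
  have hset : {m : ℕ | m ≤ N ∧ chiComb A lam d m ≠ 0}
      = ↑((range (N + 1)).filter fun m : ℕ => chiComb A lam d m ≠ 0) := by
    ext m; simp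
  change Nat.card {m : ℕ | m ≤ N ∧ chiComb A lam d m ≠ 0} = _
  rw [hset, Nat.card_coe_set_eq, Set.ncard_coe_finset]

lemma intConv_chiComb_chi (n : ℤ) :
    intConv (fun m => (chiComb A lam d m : ℝ)) (fun k => (chi A k : ℝ)) n
      = repComb A lam d n := by
  simp only [intConv, chiComb, repComb, Rz_eq_intConv, Int.cast_sum, Int.cast_mul, sum_mul]
  have hterm : ∀ a : ℤ, ∀ i ∈ range (d + 1), (lam i : ℝ) * chi A (n - a - i) * chi A a
      = lam i * (chi A (n - i - a) * chi A a) := fun a i _ => by rw [sub_right_comm, mul_assoc]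
  rw [tsum_congr fun a => sum_congr rfl (hterm a),
    Summable.tsum_finsetSum fun i _ => (summable_chi_sub_mul_chi A _).mul_left (lam i : ℝ)]
  exact sum_congr rfl fun i _ => tsum_mul_left

end Combination

section IntSeries

lemma tsum_natCast_of_neg_eq_zero {M : Type*} [AddCommMonoid M] [TopologicalSpace M] {x : ℤ → M}
    (hneg : ∀ k < 0, x k = 0) : ∑' n : ℕ, x n = ∑' k, x k :=
  Nat.cast_injective.tsum_eq fun k hk => by
    by_contra h
    exact hk (hneg k (by by_contra! h'; exact h ⟨k.toNat, Int.toNat_of_nonneg h'⟩))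

lemma summable_of_neg_eq_zero_of_abs_le_geometric {x : ℤ → ℝ} {C r : ℝ} (hr0 : 0 ≤ r)
    (hr1 : r < 1) (hneg : ∀ k < 0, x k = 0) (hle : ∀ n : ℕ, |x n| ≤ C * r ^ n) :
    Summable x := by
  refine (Nat.cast_injective.summable_iff fun k hk => hneg k ?_).1
    (((summable_geometric_of_lt_one hr0 hr1).mul_left C).of_norm_bounded hle)
  by_contra! h
  exact hk ⟨k.toNat, Int.toNat_of_nonneg h⟩

end IntSeries

section Damped

variable (A : Set ℕ) (lam : ℕ → ℤ) (d : ℕ) {ρ : ℝ}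

noncomputable def dampedChi (ρ : ℝ) (k : ℤ) : ℝ := ρ ^ k * chi A k

noncomputable def dampedChiComb (ρ : ℝ) (m : ℤ) : ℝ := ρ ^ m * chiComb A lam d m

lemma dampedChiComb_of_neg {m : ℤ} (hm : m < 0) : dampedChiComb A lam d ρ m = 0 := by
  rw [dampedChiComb, chiComb_of_neg A lam d hm, Int.cast_zero, mul_zero]

lemma abs_dampedChi_le_one (hρ0 : 0 < ρ) (hρ1 : ρ ≤ 1) (k : ℤ) :
    |dampedChi A ρ k| ≤ 1 := by
  rcases lt_or_ge k 0 with hk | hk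
  · simp [dampedChi, chi_of_neg A hk]
  rw [dampedChi, abs_mul, abs_of_pos (zpow_pos hρ0 k), abs_of_nonneg (chi_nonneg A k)]
  exact mul_le_one₀ (zpow_le_one₀ hρ0 hρ1 hk) (chi_nonneg A k) (chi_le_one A k)

lemma abs_dampedChiComb_natCast_le (hρ0 : 0 ≤ ρ) (n : ℕ) :
    |dampedChiComb A lam d ρ n| ≤ (∑ i ∈ range (d + 1), |(lam i : ℝ)|) * ρ ^ n := by
  rw [dampedChiComb, zpow_natCast, abs_mul, abs_of_nonneg (pow_nonneg hρ0 n), mul_comm]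
  exact mul_le_mul_of_nonneg_right (abs_chiComb_le A lam d n) (pow_nonneg hρ0 n)

lemma summable_dampedChi (hρ0 : 0 ≤ ρ) (hρ1 : ρ < 1) : Summable (dampedChi A ρ) :=
  summable_of_neg_eq_zero_of_abs_le_geometric (C := 1) hρ0 hρ1
    (fun k hk => by simp [dampedChi, chi_of_neg A hk]) fun n => by
      rw [dampedChi, zpow_natCast, abs_mul, abs_of_nonneg (pow_nonneg hρ0 n),
        abs_of_nonneg (chi_nonneg A n), mul_comm]
      exact mul_le_mul_of_nonneg_right (chi_le_one A n) (pow_nonneg hρ0 n)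

lemma summable_dampedChiComb (hρ0 : 0 ≤ ρ) (hρ1 : ρ < 1) :
    Summable (dampedChiComb A lam d ρ) :=
  summable_of_neg_eq_zero_of_abs_le_geometric hρ0 hρ1 (fun _ => dampedChiComb_of_neg A lam d)
    (abs_dampedChiComb_natCast_le A lam d hρ0)

lemma dampedChiComb_eq_sum (hρ : ρ ≠ 0) (m : ℤ) :
    dampedChiComb A lam d ρ m
      = ∑ i ∈ range (d + 1), ((lam i : ℝ) * ρ ^ i) * dampedChi A ρ (m - i) := by
  rw [dampedChiComb, chiComb, Int.cast_sum, mul_sum]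
  refine sum_congr rfl fun i _ => ?_
  rw [dampedChi, show ρ ^ m = ρ ^ i * ρ ^ (m - i) by
    rw [← zpow_natCast, ← zpow_add₀ hρ, add_sub_cancel]]
  push_cast; ring

lemma intConv_dampedChiComb_dampedChi (hρ : ρ ≠ 0) (n : ℤ) :
    intConv (dampedChiComb A lam d ρ) (dampedChi A ρ) n = ρ ^ n * repComb A lam d n := by
  rw [← intConv_chiComb_chi]
  exact intConv_zpow_mul hρ _ _ n

lemma tsum_sq_dampedChiComb (hρ0 : 0 < ρ) (hρ1 : ρ < 1) :
    ∑' m, dampedChiComb A lam d ρ m ^ 2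
      = ∑ i ∈ range (d + 1),
          ((lam i : ℝ) * ρ ^ i) * intCorr (dampedChiComb A lam d ρ) (dampedChi A ρ) i := by
  have hsummable (i : ℕ) :
      Summable fun m => dampedChiComb A lam d ρ m * dampedChi A ρ (m - i) :=
    (summable_dampedChiComb A lam d hρ0.le hρ1).abs.of_norm_bounded fun m => by
      rw [norm_mul, Real.norm_eq_abs]
      exact mul_le_of_le_one_right (abs_nonneg _) (abs_dampedChi_le_one A hρ0 hρ1.le _)
  have hexpand (m : ℤ) : dampedChiComb A lam d ρ m ^ 2 = ∑ i ∈ range (d + 1),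
      ((lam i : ℝ) * ρ ^ i) * (dampedChiComb A lam d ρ m * dampedChi A ρ (m - i)) := by
    conv_lhs => rw [sq]; arg 2; rw [dampedChiComb_eq_sum A lam d hρ0.ne']
    rw [mul_sum]
    exact sum_congr rfl fun i _ => by ring
  rw [tsum_congr hexpand, Summable.tsum_finsetSum fun i _ => (hsummable i).mul_left _]
  exact sum_congr rfl fun i _ => by rw [tsum_mul_left, tsum_mul_sub_eq_intCorr]

lemma Bf_mul_pow_le_tsum_sq (hρ0 : 0 < ρ) (hρ1 : ρ < 1) (N : ℕ) :
    (Bf A lam d N : ℝ) * ρ ^ (2 * N) ≤ ∑' m, dampedChiComb A lam d ρ m ^ 2 := by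
  set Λ := ∑ i ∈ range (d + 1), |(lam i : ℝ)|
  have hsummable : Summable fun m : ℕ => dampedChiComb A lam d ρ m ^ 2 := by
    refine ((summable_geometric_of_lt_one (sq_nonneg ρ) (by nlinarith)).mul_left (Λ ^ 2))
      |>.of_nonneg_of_le (fun _ => sq_nonneg _) fun m => ?_
    rw [← sq_abs, ← pow_mul, mul_comm 2 m, pow_mul, ← mul_pow]
    exact pow_le_pow_left₀ (abs_nonneg _) (abs_dampedChiComb_natCast_le A lam d hρ0.le m) 2
  rw [← tsum_natCast_of_neg_eq_zero fun k hk => by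
      rw [dampedChiComb_of_neg A lam d hk, sq, zero_mul],
    Bf_eq_card, ← nsmul_eq_mul, ← sum_const]
  refine (sum_le_sum fun m hm => ?_).trans (hsummable.sum_le_tsum _ fun _ _ => sq_nonneg _)
  obtain ⟨hmN, hm⟩ := mem_filter.1 hm
  have hcomb : (1 : ℝ) ≤ (chiComb A lam d m : ℝ) ^ 2 := by
    rw [one_le_sq_iff_one_le_abs, ← Int.cast_abs]
    exact_mod_cast Int.one_le_abs hm
  rw [dampedChiComb, zpow_natCast, mul_pow, ← pow_mul, mul_comm m]
  calc ρ ^ (2 * N) ≤ ρ ^ (2 * m) :=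
        pow_le_pow_of_le_one hρ0.le hρ1.le (by rw [mem_range] at hmN; omega)
    _ ≤ ρ ^ (2 * m) * (chiComb A lam d m : ℝ) ^ 2 :=
        le_mul_of_one_le_right (by positivity) hcomb

lemma Bf_mul_pow_le (hρ0 : 0 < ρ) (hρ1 : ρ < 1) (N : ℕ) :
    (Bf A lam d N : ℝ) * ρ ^ (2 * N)
      ≤ (∑ i ∈ range (d + 1), |(lam i : ℝ)|)
          * √(∑' n : ℕ, (ρ ^ n * repComb A lam d n) ^ 2) := by
  set T := dampedChiComb A lam d ρ
  set W := ∑' n : ℕ, (ρ ^ n * repComb A lam d n) ^ 2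
  have hW : HasSum (fun i => intCorr T (dampedChi A ρ) i ^ 2) W := by
    convert hasSum_sq_intCorr (summable_dampedChiComb A lam d hρ0.le hρ1)
      (summable_dampedChi A hρ0.le hρ1) using 1
    simp only [W, intConv_dampedChiComb_dampedChi A lam d hρ0.ne']
    rw [← tsum_natCast_of_neg_eq_zero fun k hk => by
      rw [repComb_of_neg A lam d hk, mul_zero, sq, zero_mul]]
    simp only [zpow_natCast]
  have hcorr (i : ℤ) : |intCorr T (dampedChi A ρ) i| ≤ √W :=
    Real.abs_le_sqrt (le_hasSum hW i fun _ _ => sq_nonneg _)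
  calc (Bf A lam d N : ℝ) * ρ ^ (2 * N) ≤ ∑' m, T m ^ 2 :=
        Bf_mul_pow_le_tsum_sq A lam d hρ0 hρ1 N
    _ = ∑ i ∈ range (d + 1), ((lam i : ℝ) * ρ ^ i) * intCorr T (dampedChi A ρ) i :=
        tsum_sq_dampedChiComb A lam d hρ0 hρ1
    _ ≤ ∑ i ∈ range (d + 1), |(lam i : ℝ)| * √W := sum_le_sum fun i _ => by
        refine (le_abs_self _).trans ?_
        rw [abs_mul, abs_mul, abs_of_pos (pow_pos hρ0 i)]
        exact mul_le_mul (mul_le_of_le_one_right (abs_nonneg _) (pow_le_one₀ hρ0.le hρ1.le))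
          (hcorr i) (abs_nonneg _) (abs_nonneg _)
    _ = _ := (sum_mul ..).symm

end Damped

section Asymptotics

open Real

lemma tsum_sq_pow_mul_le {s : ℕ → ℝ} {K r : ℝ} {n₀ : ℕ} (hr0 : 0 ≤ r) (hr1 : r < 1)
    (hs : ∀ n ≥ n₀, |s n| ≤ K) :
    ∑' n, (r ^ n * s n) ^ 2 ≤ ∑ n ∈ range n₀, s n ^ 2 + K ^ 2 * (1 - r ^ 2)⁻¹ := by
  have hr2 : r ^ 2 < 1 := by nlinarith
  have hhead : Summable fun n => if n < n₀ then s n ^ 2 else 0 :=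
    summable_of_ne_finset_zero (s := range n₀) fun n hn => if_neg (by simpa using hn)
  have htail : Summable fun n => K ^ 2 * (r ^ 2) ^ n :=
    (summable_geometric_of_lt_one (sq_nonneg r) hr2).mul_left _
  have hdom (n : ℕ) :
      (r ^ n * s n) ^ 2 ≤ (if n < n₀ then s n ^ 2 else 0) + K ^ 2 * (r ^ 2) ^ n := by
    have hrn : (r ^ 2) ^ n ≤ 1 := pow_le_one₀ (sq_nonneg r) hr2.le
    rw [mul_pow, ← pow_mul, mul_comm n, pow_mul]
    split_ifs with hn
    · nlinarith [sq_nonneg (s n), pow_nonneg (sq_nonneg r) n, sq_nonneg K]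
    · rw [zero_add, mul_comm]
      exact mul_le_mul_of_nonneg_right (sq_le_sq' (abs_le.1 (hs n (not_lt.1 hn))).1
        (abs_le.1 (hs n (not_lt.1 hn))).2) (pow_nonneg (sq_nonneg r) n)
  calc ∑' n, (r ^ n * s n) ^ 2
      ≤ ∑' n, ((if n < n₀ then s n ^ 2 else 0) + K ^ 2 * (r ^ 2) ^ n) :=
        ((hhead.add htail).of_nonneg_of_le (fun _ => sq_nonneg _) hdom).tsum_le_tsum hdom
          (hhead.add htail)
    _ = _ := by
        rw [hhead.tsum_add htail, tsum_mul_left, tsum_geometric_of_lt_one (sq_nonneg r) hr2,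
          tsum_eq_sum (s := range n₀) fun n hn => if_neg (by simpa using hn)]
        congr 1
        exact sum_congr rfl fun n hn => if_pos (mem_range.1 hn)

lemma inv_one_sub_exp_neg_le {x : ℝ} (hx : 0 < x) : (1 - exp (-x))⁻¹ ≤ exp x / x := by
  have hmul : x * exp (-x) ≤ 1 - exp (-x) := by
    nlinarith [add_one_le_exp x, exp_pos (-x), exp_neg x, mul_inv_cancel₀ (exp_pos x).ne']
  rw [div_eq_mul_inv, ← inv_inv (exp x), ← mul_inv, ← exp_neg, mul_comm]
  exact inv_anti₀ (by positivity) hmul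

lemma tendsto_sqrt_div_add_mul_exp (C K : ℝ) :
    Tendsto (fun N : ℕ => √(C / N + K ^ 2 * exp (2 / N))) atTop (nhds |K|) := by
  have hexp : Tendsto (fun N : ℕ => exp (2 / N)) atTop (nhds 1) := by
    simpa [Function.comp_def] using
      (continuous_exp.tendsto 0).comp (tendsto_const_div_atTop_nhds_zero_nat 2)
  rw [← sqrt_sq_eq_abs]
  simpa using ((tendsto_const_div_atTop_nhds_zero_nat C).add (hexp.const_mul (K ^ 2))).sqrt

end Asymptotics

section Main

open Real

variable (A : Set ℕ) (lam : ℕ → ℤ) (d : ℕ)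

/-- The choice `ρ = e^{-1/N}` in `Bf_mul_pow_le`: then `ρ^{2N} = e^{-2}` and
`(1 - ρ²)⁻¹ ≤ e^{2/N} N / 2`. -/
lemma mul_Bf_div_sqrt_le (hΛ : 0 < ∑ i ∈ range (d + 1), |(lam i : ℝ)|) {K : ℝ} {n₀ : ℕ}
    (hK : ∀ n ≥ n₀, |repComb A lam d n| ≤ K) {N : ℕ} (hN : 0 < N) :
    √2 / (exp 2 * ∑ i ∈ range (d + 1), |(lam i : ℝ)|) * ((Bf A lam d N : ℝ) / √N)
      ≤ √(2 * (∑ n ∈ range n₀, repComb A lam d n ^ 2) / N + K ^ 2 * exp (2 / N)) := by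
  set Λ := ∑ i ∈ range (d + 1), |(lam i : ℝ)|
  set C₀ := ∑ n ∈ range n₀, repComb A lam d n ^ 2
  set ρ := exp (-(1 / N))
  have hN' : (0 : ℝ) < N := Nat.cast_pos.2 hN
  have hρ0 : 0 < ρ := exp_pos _
  have hρ1 : ρ < 1 := exp_lt_one_iff.2 (by simp [hN'])
  have hρN : ρ ^ (2 * N) = exp (-2) := by
    rw [← exp_nat_mul]; congr 1; push_cast; field_simp
  have hρ2 : 1 - ρ ^ 2 = 1 - exp (-(2 / N)) := by
    rw [← exp_nat_mul]; congr 2; push_cast; ring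
  set M := C₀ + K ^ 2 * (exp (2 / N) / (2 / N))
  have hM : ∑' n : ℕ, (ρ ^ n * repComb A lam d n) ^ 2 ≤ M := by
    refine (tsum_sq_pow_mul_le hρ0.le hρ1 hK).trans (add_le_add_right ?_ _)
    rw [hρ2]
    exact mul_le_mul_of_nonneg_left (inv_one_sub_exp_neg_le (by positivity)) (sq_nonneg K)
  have hB : (Bf A lam d N : ℝ) * exp (-2) ≤ Λ * √M :=
    hρN ▸ (Bf_mul_pow_le A lam d hρ0 hρ1 N).trans
      (mul_le_mul_of_nonneg_left (sqrt_le_sqrt hM) hΛ.le)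
  calc √2 / (exp 2 * Λ) * ((Bf A lam d N : ℝ) / √N)
      = √2 * ((Bf A lam d N : ℝ) * exp (-2)) / (Λ * √N) := by
        rw [exp_neg]; field_simp
    _ ≤ √2 * (Λ * √M) / (Λ * √N) := by gcongr
    _ = √(2 * M / N) := by
        rw [sqrt_div' _ hN'.le, sqrt_mul zero_le_two]; field_simp
    _ = _ := by congr 1; simp only [M]; field_simp

end Main

theorem stmt7_general (d : ℕ) (lam : ℕ → ℤ)
    (hlam : ∃ i ≤ d, lam i ≠ 0)
    (A : Set ℕ) :
    limsup (fun n : ℕ =>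
        ((|∑ i ∈ Finset.range (d + 1), (lam i : ℝ) * Rz A ((n : ℤ) - i)| : ℝ) : EReal)) atTop
      ≥ limsup (fun n : ℕ =>
        ((Real.sqrt 2 / (Real.exp 2 * ∑ i ∈ Finset.range (d + 1), |(lam i : ℝ)|) *
          ((Bf A lam d n : ℝ) / Real.sqrt n) : ℝ) : EReal)) atTop := by
  obtain ⟨i, hid, hi⟩ := hlam
  have hΛ : 0 < ∑ i ∈ range (d + 1), |(lam i : ℝ)| :=
    (abs_pos.2 (Int.cast_ne_zero.2 hi)).trans_le
      (single_le_sum (fun j _ => abs_nonneg (lam j : ℝ)) (mem_range.2 (Nat.lt_succ_of_le hid)))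
  rw [ge_iff_le, ← EReal.le_of_forall_lt_iff_le]
  intro K hK
  obtain ⟨n₀, hn₀⟩ : ∃ n₀ : ℕ, ∀ n ≥ n₀, |repComb A lam d (n : ℕ)| ≤ K := by
    obtain ⟨n₀, h⟩ := eventually_atTop.1 (eventually_lt_of_limsup_lt hK)
    exact ⟨n₀, fun n hn => (EReal.coe_lt_coe_iff.1 (h n hn)).le⟩
  have hK0 : 0 ≤ K := (abs_nonneg _).trans (hn₀ n₀ le_rfl)
  calc _ ≤ limsup (fun N : ℕ => ((√(2 * (∑ n ∈ range n₀, repComb A lam d n ^ 2) / N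
          + K ^ 2 * Real.exp (2 / N)) : ℝ) : EReal)) atTop :=
        limsup_le_limsup (eventually_atTop.2 ⟨1, fun N hN =>
          EReal.coe_le_coe_iff.2 (mul_Bf_div_sqrt_le A lam d hΛ hn₀ hN)⟩)
    _ = K := by
        rw [(EReal.tendsto_coe.2 (tendsto_sqrt_div_add_mul_exp _ K)).limsup_eq, abs_of_nonneg hK0]

theorem stmt7 (d : ℕ) (lam : ℕ → ℤ)
    (hlam : ∃ i ≤ d, lam i ≠ 0)
    (hsum : ∑ i ∈ Finset.range (d + 1), lam i = 0)
    (A : Set ℕ) (hA : A.Infinite) :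
    limsup (fun n : ℕ =>
        ((|∑ i ∈ Finset.range (d + 1), (lam i : ℝ) * Rz A ((n : ℤ) - i)| : ℝ) : EReal)) atTop
      ≥ limsup (fun n : ℕ =>
        ((Real.sqrt 2 / (Real.exp 2 * ∑ i ∈ Finset.range (d + 1), |(lam i : ℝ)|) *
          ((Bf A lam d n : ℝ) / Real.sqrt n) : ℝ) : EReal)) atTop :=
  stmt7_general d lam hlam A
end

section
/- Let S be a Sidon set of nonnegative integers, d, M positive integers, C ⊆ [0, M(d+1)-1] a finite set, S_M = S with all pairs at distance ≤ 2M(d+1) removed, and A = C + S_M. Then for every n, R_A(n) = Σ_{j=0}^{2M(d+1)} R_C(j)·R_{S_M}(n-j), and consequently for integers λ_0,...,λ_d, |Σ_{i=0}^d λ_i R_A(n-i)| ≤ 4(M+1)(d+1)·max_k |Σ_{i=0}^d λ_i R_C(k-i)|. -/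
/-!
Distinct elements of `S_M` are more than `2M(d+1)` apart while `C` lies in `[0, M(d+1))`, so
every element of `A = C + S_M` decomposes uniquely as `c + s`; hence `R_A` is the convolution
`R_C * R_{S_M}`. Convolution is associative, so `∑ λ_i R_A(n - i) = ∑_t R_{S_M}(n - t) (λ * R_C)(t)`,
a sum of `2M(d+1) + d + 1` terms, each at most `2K` in absolute value because `S_M ⊆ S` is Sidon.
-/

open Filter Finset
open scoped Classical

open scoped Pointwise

noncomputable def reprPairs (X : Set ℕ) (n : ℕ) : Finset (ℕ × ℕ) :=
  (antidiagonal n).filter fun p => p.1 ∈ X ∧ p.2 ∈ X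

lemma mem_reprPairs {X : Set ℕ} {n : ℕ} {p : ℕ × ℕ} :
    p ∈ reprPairs X n ↔ p.1 ∈ X ∧ p.2 ∈ X ∧ p.1 + p.2 = n := by
  rw [reprPairs, mem_filter, Finset.HasAntidiagonal.mem_antidiagonal, and_comm, and_assoc]

lemma Rf_eq_card_reprPairs (X : Set ℕ) (n : ℕ) : Rf X n = #(reprPairs X n) := by
  rw [Rf, ← Set.ncard_coe_finset, ← Nat.card_coe_set_eq]
  congr! 2
  ext p
  rw [Finset.mem_coe, mem_reprPairs, Set.mem_ofPred_eq]

lemma Rf_mono {X Y : Set ℕ} (h : X ⊆ Y) (n : ℕ) : Rf X n ≤ Rf Y n := by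
  simp only [Rf_eq_card_reprPairs]
  exact card_le_card fun p hp => by
    rw [mem_reprPairs] at hp ⊢
    exact ⟨h hp.1, h hp.2.1, hp.2.2⟩

lemma Rf_eq_zero_of_lt {C : Set ℕ} {P j : ℕ} (hC : ∀ c ∈ C, c ≤ P) (hj : 2 * P < j) :
    Rf C j = 0 := by
  rw [Rf_eq_card_reprPairs, card_eq_zero, eq_empty_iff_forall_notMem]
  intro p hp
  rw [mem_reprPairs] at hp
  have := hC _ hp.1
  have := hC _ hp.2.1
  omega

@[simp]
lemma Rz_natCast (X : Set ℕ) (k : ℕ) : Rz X k = Rf X k := by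
  simp [Rz]

lemma Rz_of_neg (X : Set ℕ) {k : ℤ} (hk : k < 0) : Rz X k = 0 :=
  if_neg (not_le.2 hk)

lemma Rz_le {X : Set ℕ} {B : ℕ} (h : ∀ n, Rf X n ≤ B) (k : ℤ) : Rz X k ≤ B := by
  unfold Rz
  split_ifs
  exacts [h _, Nat.zero_le _]

lemma Rz_support_subset {C : Set ℕ} {P : ℕ} (hC : ∀ c ∈ C, c ≤ P) :
    Function.support (fun k => (Rz C k : ℝ)) ⊆ Set.Icc 0 (2 * P : ℤ) := by
  intro k hk
  contrapose! hk
  rcases lt_or_ge k 0 with hneg | hnonneg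
  · simp [Rz_of_neg C hneg]
  · lift k to ℕ using hnonneg
    have : 2 * P < k := by simp only [Set.mem_Icc, Nat.cast_nonneg, true_and, not_le] at hk; omega
    simp [Rf_eq_zero_of_lt hC this]

lemma add_eq_add_of_separated {C T : Set ℕ} {P : ℕ} (hC : ∀ c ∈ C, c ≤ P)
    (hsep : ∀ s ∈ T, ∀ t ∈ T, s ≠ t → (P : ℤ) < |(s : ℤ) - t|) :
    ∀ c ∈ C, ∀ s ∈ T, ∀ c' ∈ C, ∀ s' ∈ T, c + s = c' + s' → c = c' ∧ s = s' := by
  intro c hc s hs c' hc' s' hs' heq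
  by_cases hss' : s = s'
  · omega
  · have hc := hC c hc
    have hc' := hC c' hc'
    have := lt_abs.1 (hsep s hs s' hs' hss')
    omega

lemma Rf_add_eq_sum_antidiagonal {C T : Set ℕ}
    (hinj : ∀ c ∈ C, ∀ s ∈ T, ∀ c' ∈ C, ∀ s' ∈ T, c + s = c' + s' → c = c' ∧ s = s') (n : ℕ) :
    Rf (C + T) n = ∑ p ∈ antidiagonal n, Rf C p.1 * Rf T p.2 := by
  simp only [Rf_eq_card_reprPairs, ← card_product]
  rw [← card_sigma, eq_comm]
  refine card_bij (fun (q : (_ : ℕ × ℕ) × (ℕ × ℕ) × (ℕ × ℕ)) _ => (q.2.1.1 + q.2.2.1, q.2.1.2 + q.2.2.2)) ?_ ?_ ?_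
  · rintro ⟨p, ⟨c, c'⟩, ⟨s, s'⟩⟩ hq
    simp only [mem_sigma, mem_product, Finset.HasAntidiagonal.mem_antidiagonal, mem_reprPairs] at hq ⊢
    exact ⟨Set.add_mem_add hq.2.1.1 hq.2.2.1, Set.add_mem_add hq.2.1.2.1 hq.2.2.2.1, by omega⟩
  · rintro ⟨p, ⟨c, c'⟩, ⟨s, s'⟩⟩ hq ⟨p', ⟨e, e'⟩, ⟨t, t'⟩⟩ hq' h
    simp only [mem_sigma, mem_product, Finset.HasAntidiagonal.mem_antidiagonal, mem_reprPairs, Prod.mk.injEq] at hq hq' h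
    obtain ⟨rfl, rfl⟩ := hinj c hq.2.1.1 s hq.2.2.1 e hq'.2.1.1 t hq'.2.2.1 h.1
    obtain ⟨rfl, rfl⟩ := hinj c' hq.2.1.2.1 s' hq.2.2.2.1 e' hq'.2.1.2.1 t' hq'.2.2.2.1 h.2
    obtain rfl : p = p' := Prod.ext (by omega) (by omega)
    rfl
  · rintro ⟨a, a'⟩ ha
    rw [mem_reprPairs] at ha
    obtain ⟨⟨c, hc, s, hs, rfl⟩, ⟨c', hc', s', hs', rfl⟩, hn⟩ := ha
    refine ⟨⟨(c + c', s + s'), ⟨c, c'⟩, ⟨s, s'⟩⟩, ?_, rfl⟩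
    simp only [mem_sigma, mem_product, Finset.HasAntidiagonal.mem_antidiagonal, mem_reprPairs,
      and_true]
    exact ⟨by simp only at hn; omega, ⟨hc, hc'⟩, hs, hs'⟩

lemma Rz_add_eq_sum_range {C T : Set ℕ} {P N : ℕ} (hC : ∀ c ∈ C, c ≤ P)
    (hsep : ∀ s ∈ T, ∀ t ∈ T, s ≠ t → (P : ℤ) < |(s : ℤ) - t|) (hN : 2 * P < N) (k : ℤ) :
    Rz (C + T) k = ∑ j ∈ range N, Rf C j * Rz T (k - j) := by
  rcases lt_or_ge k 0 with hk | hk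
  · rw [Rz_of_neg _ hk]
    exact (sum_eq_zero fun j _ => by rw [Rz_of_neg _ (by omega), mul_zero]).symm
  lift k to ℕ using hk
  set F : ℕ → ℕ := fun j => Rf C j * Rz T (k - j)
  have hF : ∀ j ≥ min (k + 1) N, F j = 0 := by
    intro j hj
    rcases min_le_iff.1 hj with hjk | hjN
    · simp only [F, Rz_of_neg T (by omega : (k : ℤ) - j < 0), mul_zero]
    · simp only [F, Rf_eq_zero_of_lt hC (by omega : 2 * P < j), zero_mul]
  calc Rz (C + T) k = ∑ j ∈ range (k + 1), F j := by
        rw [Rz_natCast, Rf_add_eq_sum_antidiagonal (add_eq_add_of_separated hC hsep),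
          Nat.sum_antidiagonal_eq_sum_range_succ_mk]
        refine sum_congr rfl fun j hj => ?_
        rw [mem_range] at hj
        simp only [F, ← Nat.cast_sub (Nat.le_of_lt_succ hj), Rz_natCast]
    _ = ∑ j ∈ range N, F j := by
        rw [eventually_constant_sum hF (min_le_left _ _),
          eventually_constant_sum hF (min_le_right _ _)]

section Convolution

variable {R : Type*} [CommRing R] {c : ℤ → R} {T : ℕ}

lemma sum_range_mul_shift_eq (hc : Function.support c ⊆ Set.Icc 0 (T : ℤ)) (g : ℤ → R)
    {i d : ℕ} (hi : i ≤ d) (m : ℤ) :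
    ∑ j ∈ range (T + 1), c j * g (m - i - j) = ∑ t ∈ range (T + d + 1), c (t - i) * g (m - t) := by
  have hsub : Ico i (i + (T + 1)) ⊆ range (T + d + 1) := fun t ht => by
    rw [mem_Ico] at ht
    rw [mem_range]
    omega
  have hzero : ∀ t ∈ range (T + d + 1), t ∉ Ico i (i + (T + 1)) →
      c (t - i) * g (m - t) = 0 := by
    intro t _ ht
    have hct : c (t - i) = 0 := Function.notMem_support.1 fun h => ht <| by
      have := hc h
      rw [Set.mem_Icc] at this
      rw [mem_Ico]
      omega
    rw [hct, zero_mul]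
  rw [← sum_subset hsub hzero, sum_Ico_eq_sum_range, Nat.add_sub_cancel_left]
  refine sum_congr rfl fun j _ => ?_
  rw [show ((i + j : ℕ) : ℤ) - i = j by push_cast; ring,
    show m - ((i + j : ℕ) : ℤ) = m - i - j by push_cast; ring]

lemma sum_mul_sum_conv_eq (lam : ℕ → R) (hc : Function.support c ⊆ Set.Icc 0 (T : ℤ))
    (g : ℤ → R) (d : ℕ) (m : ℤ) :
    ∑ i ∈ range (d + 1), lam i * ∑ j ∈ range (T + 1), c j * g (m - i - j) =
      ∑ t ∈ range (T + d + 1), g (m - t) * ∑ i ∈ range (d + 1), lam i * c (t - i) := by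
  calc _ = ∑ i ∈ range (d + 1), ∑ t ∈ range (T + d + 1), lam i * (c (t - i) * g (m - t)) :=
        sum_congr rfl fun i hi => by
          rw [sum_range_mul_shift_eq hc g (Nat.lt_succ_iff.1 (mem_range.1 hi)), mul_sum]
    _ = _ := by
        rw [sum_comm]
        refine sum_congr rfl fun t _ => ?_
        rw [mul_sum]
        exact sum_congr rfl fun i _ => by ring

end Convolution

lemma abs_sum_mul_le {N : ℕ} {f g : ℕ → ℝ} {B K : ℝ} (hf : ∀ t, |f t| ≤ B)
    (hg : ∀ t, |g t| ≤ K) : |∑ t ∈ range N, f t * g t| ≤ N * (B * K) :=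
  calc |∑ t ∈ range N, f t * g t| ≤ ∑ t ∈ range N, |f t * g t| := abs_sum_le_sum_abs _ _
    _ ≤ ∑ t ∈ range N, B * K := sum_le_sum fun t _ => by
        rw [abs_mul]
        exact mul_le_mul (hf t) (hg t) (abs_nonneg _) ((abs_nonneg _).trans (hf t))
    _ = N * (B * K) := by rw [sum_const, card_range, nsmul_eq_mul]

theorem stmt14_general (S : Set ℕ) (hS : ∀ n, Rf S n ≤ 2)
    (d M : ℕ)
    (C : Set ℕ) (hC : C ⊆ Set.Icc 0 (M * (d + 1) - 1))
    (SM : Set ℕ)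
    (hSM : SM = {s ∈ S | ∀ t ∈ S, t ≠ s → (2 * M * (d + 1) : ℤ) < |(s : ℤ) - t|})
    (A : Set ℕ) (hA : A = Set.image2 (· + ·) C SM) :
    (∀ n : ℕ, Rf A n =
        ∑ j ∈ Finset.range (2 * M * (d + 1) + 1), Rf C j * Rz SM ((n : ℤ) - j)) ∧
    ∀ (lam : ℕ → ℤ) (K : ℝ),
      (∀ k : ℤ, |∑ i ∈ Finset.range (d + 1), (lam i : ℝ) * Rz C (k - i)| ≤ K) →
      ∀ n : ℕ,
        |∑ i ∈ Finset.range (d + 1), (lam i : ℝ) * Rz A ((n : ℤ) - i)|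
          ≤ 4 * (M + 1) * (d + 1) * K := by
  set P := M * (d + 1) - 1
  set T := 2 * M * (d + 1)
  have hPT : 2 * P ≤ T := by simp only [P, T, mul_assoc]; omega
  have hCP : ∀ c ∈ C, c ≤ P := fun c hc => (hC hc).2
  have hsep : ∀ s ∈ SM, ∀ t ∈ SM, s ≠ t → (P : ℤ) < |(s : ℤ) - t| := by
    rw [hSM]
    rintro s ⟨-, hs⟩ t ⟨ht, -⟩ hst
    have hPT' : (P : ℤ) ≤ T := by exact_mod_cast (by omega : P ≤ T)
    push_cast [T] at hPT'
    exact hPT'.trans_lt (hs t ht (Ne.symm hst))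
  have hconv : ∀ k : ℤ, Rz A k = ∑ j ∈ range (T + 1), Rf C j * Rz SM (k - j) := by
    rw [hA, Set.image2_add]
    exact Rz_add_eq_sum_range hCP hsep (by omega)
  refine ⟨fun n => by simpa using hconv n, fun lam K hK n => ?_⟩
  have hSM2 (k : ℤ) : |(Rz SM k : ℝ)| ≤ 2 := by
    have hSMS : SM ⊆ S := hSM ▸ Set.sep_subset _ _
    rw [abs_of_nonneg (Nat.cast_nonneg _)]
    exact_mod_cast Rz_le (fun m => (Rf_mono hSMS m).trans (hS m)) k
  have hCsupp : Function.support (fun k => (Rz C k : ℝ)) ⊆ Set.Icc 0 (T : ℤ) :=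
    (Rz_support_subset hCP).trans (Set.Icc_subset_Icc le_rfl (by exact_mod_cast hPT))
  have hK0 : 0 ≤ K := (abs_nonneg _).trans (hK 0)
  calc _ = |∑ t ∈ range (T + d + 1), (Rz SM (n - t) : ℝ) *
          ∑ i ∈ range (d + 1), (lam i : ℝ) * Rz C (t - i)| := by
        simp only [hconv, Nat.cast_sum, Nat.cast_mul, ← Rz_natCast C]
        congr 1
        exact sum_mul_sum_conv_eq (fun i => (lam i : ℝ)) hCsupp (fun k => (Rz SM k : ℝ)) d n
    _ ≤ (T + d + 1 : ℕ) * (2 * K) := abs_sum_mul_le (fun t => hSM2 _) (fun t => hK t)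
    _ ≤ 4 * (M + 1) * (d + 1) * K := by
        rw [← mul_assoc]
        refine mul_le_mul_of_nonneg_right ?_ hK0
        push_cast [T]
        nlinarith

theorem stmt14 (S : Set ℕ) (hS : ∀ n, Rf S n ≤ 2)
    (d M : ℕ) (hd : 0 < d) (hM : 0 < M)
    (C : Set ℕ) (hCfin : C.Finite) (hC : C ⊆ Set.Icc 0 (M * (d + 1) - 1))
    (SM : Set ℕ)
    (hSM : SM = {s ∈ S | ∀ t ∈ S, t ≠ s → (2 * M * (d + 1) : ℤ) < |(s : ℤ) - t|})
    (A : Set ℕ) (hA : A = Set.image2 (· + ·) C SM) :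
    (∀ n : ℕ, Rf A n =
        ∑ j ∈ Finset.range (2 * M * (d + 1) + 1), Rf C j * Rz SM ((n : ℤ) - j)) ∧
    ∀ (lam : ℕ → ℤ) (K : ℝ),
      (∀ k : ℤ, |∑ i ∈ Finset.range (d + 1), (lam i : ℝ) * Rz C (k - i)| ≤ K) →
      ∀ n : ℕ,
        |∑ i ∈ Finset.range (d + 1), (lam i : ℝ) * Rz A ((n : ℤ) - i)|
          ≤ 4 * (M + 1) * (d + 1) * K :=
  stmt14_general S hS d M C hC SM hSM A hA
end

section
/- There exists an infinite Sidon set S ⊆ ℕ such that limsup_{n→∞} S(n)/√n ≥ 1/√2, where S(n) = #{s ∈ S : s ≤ n}. -/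
open Filter Finset
open scoped Classical

/-!
Stage `k` of the construction starts from a finite Sidon set `T ⊆ [0, M]` and a prime
`p ≥ (k + 1) (M + 1)`. With `g` a primitive root mod `p`, Ruzsa's set
`{a < p (p - 1) : a ≡ g ^ a (mod p)}` is a Sidon set of size `p - 1`: equal sums `a + b = c + d`
give equal sums and products of the residues `g ^ a, g ^ b` and `g ^ c, g ^ d`, hence equal pairs
of residues. As differences in a Sidon set are distinct, deleting at most `M` elements leaves its
elements more than `M` apart; shifted by `p ^ 2` and adjoined to `T` they keep the Sidon property.
The result has at least `(1 - 1 / (k + 1)) p` elements up to `n = 2 p ^ 2`, i.e. about `√(n / 2)`;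
the union of the chain of stages is the required set.
-/

def IsSidon {α : Type*} [Add α] (A : Set α) : Prop :=
  ∀ a ∈ A, ∀ b ∈ A, ∀ c ∈ A, ∀ d ∈ A, a + b = c + d → (a = c ∧ b = d) ∨ (a = d ∧ b = c)

namespace IsSidon

variable {α : Type*} [Add α]

theorem mono {A B : Set α} (hB : IsSidon B) (hAB : A ⊆ B) : IsSidon A :=
  fun a ha b hb c hc d hd => hB a (hAB ha) b (hAB hb) c (hAB hc) d (hAB hd)

theorem iUnion_of_monotone {A : ℕ → Set α} (hmono : Monotone A) (hA : ∀ k, IsSidon (A k)) :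
    IsSidon (⋃ k, A k) := by
  intro a ha b hb c hc d hd
  simp only [Set.mem_iUnion] at ha hb hc hd
  obtain ⟨i, ha⟩ := ha
  obtain ⟨j, hb⟩ := hb
  obtain ⟨k, hc⟩ := hc
  obtain ⟨l, hd⟩ := hd
  have hle : ∀ {n}, n ≤ max (max i j) (max k l) → A n ⊆ A (max (max i j) (max k l)) :=
    fun h => hmono h
  exact hA _ a (hle (by omega) ha) b (hle (by omega) hb) c (hle (by omega) hc) d (hle (by omega) hd)

end IsSidon

theorem IsSidon.rf_le_two {S : Set ℕ} (hS : IsSidon S) (n : ℕ) : Rf S n ≤ 2 := by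
  set P : Set (ℕ × ℕ) := {q | q.1 ∈ S ∧ q.2 ∈ S ∧ q.1 + q.2 = n}
  rcases P.eq_empty_or_nonempty with hP | ⟨⟨a, b⟩, ha, hb, hab⟩
  · simp [Rf, P, hP]
  have hsub : P ⊆ {(a, b), (b, a)} := by
    rintro ⟨c, d⟩ ⟨hc, hd, hcd⟩
    rcases hS c hc d hd a ha b hb (hcd.trans hab.symm) with ⟨rfl, rfl⟩ | ⟨rfl, rfl⟩ <;> simp
  calc Rf S n = P.ncard := Nat.card_coe_set_eq P
    _ ≤ ({(a, b), (b, a)} : Set (ℕ × ℕ)).ncard := Set.ncard_le_ncard hsub (Set.toFinite _)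
    _ ≤ 2 := (Set.ncard_insert_le _ _).trans (by simp)

theorem card_le_cnt {S : Set ℕ} {T : Finset ℕ} {N : ℕ} (hTS : (T : Set ℕ) ⊆ S)
    (hTN : ∀ t ∈ T, t ≤ N) : #T ≤ cnt S N := by
  rw [cnt, Nat.card_coe_set_eq, ← Set.ncard_coe_finset]
  exact Set.ncard_le_ncard (fun t ht => ⟨hTS ht, hTN t ht⟩)
    ((Set.finite_Iic N).subset fun _ h => h.2)

theorem Set.infinite_of_le_card_finset {α : Type*} {S : Set α} (T : ℕ → Finset α)
    (hTS : ∀ k, (T k : Set α) ⊆ S) (hT : ∀ k, k ≤ #(T k)) : S.Infinite := by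
  intro hS
  have := Set.ncard_le_ncard (hTS (S.ncard + 1)) hS
  rw [Set.ncard_coe_finset] at this
  have := hT (S.ncard + 1)
  omega

theorem le_limsup_of_tendsto_of_le_comp {β : Type*} [CompleteLinearOrder β] [TopologicalSpace β]
    [OrderTopology β] {u v : ℕ → β} {N : ℕ → ℕ} {L : β} (hN : Tendsto N atTop atTop)
    (hv : Tendsto v atTop (nhds L)) (hvu : ∀ k, v k ≤ u (N k)) : L ≤ limsup u atTop :=
  calc L = limsup v atTop := hv.limsup_eq.symm
    _ ≤ limsup (u ∘ N) atTop := limsup_le_limsup (Eventually.of_forall hvu)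
    _ = limsup u (map N atTop) := limsup_comp u N atTop
    _ ≤ limsup u atTop := limsup_le_limsup_of_le hN

theorem eq_and_eq_or_eq_and_eq_of_add_eq_add_of_mul_eq_mul {R : Type*} [CommRing R]
    [NoZeroDivisors R] {a b c d : R} (hs : a + b = c + d) (hp : a * b = c * d) :
    (a = c ∧ b = d) ∨ (a = d ∧ b = c) := by
  have : (a - c) * (a - d) = 0 := by linear_combination a * hs - hp
  rcases mul_eq_zero.1 this with h | h
  · have h := sub_eq_zero.1 h
    subst h
    exact Or.inl ⟨rfl, add_left_cancel hs⟩
  · have h := sub_eq_zero.1 h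
    subst h
    exact Or.inr ⟨rfl, add_left_cancel (hs.trans (add_comm _ _))⟩

theorem ZMod.orderOf_units_coprime {p : ℕ} [Fact p.Prime] (g : (ZMod p)ˣ) :
    (orderOf g).Coprime p := by
  have hp := (Fact.out : p.Prime)
  refine Nat.Coprime.coprime_dvd_left ?_ ((Nat.coprime_self_sub_left hp.one_le).2 ?_)
  · rw [← ZMod.card_units p]
    exact orderOf_dvd_card
  · exact Nat.coprime_one_left p

-- By the Chinese remainder theorem this set has exactly one element in each class modulo
-- `orderOf g`: the `a < p * orderOf g` with `a ≡ i [MOD orderOf g]` and `a ≡ g ^ i` modulo `p`.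
noncomputable def ruzsaSet (p : ℕ) (g : (ZMod p)ˣ) : Finset ℕ :=
  (range (p * orderOf g)).filter fun a => (a : ZMod p) = ((g ^ a : (ZMod p)ˣ) : ZMod p)

namespace ruzsaSet

variable {p : ℕ} [Fact p.Prime] (g : (ZMod p)ˣ)

theorem injOn_cast : Set.InjOn (Nat.cast : ℕ → ZMod p) (ruzsaSet p g) := by
  intro a ha b hb hab
  simp only [ruzsaSet, mem_coe, mem_filter, mem_range] at ha hb
  have hpow : g ^ a = g ^ b := Units.ext (ha.2.symm.trans (hab.trans hb.2))
  have hmodp : a ≡ b [MOD p] := (ZMod.natCast_eq_natCast_iff a b p).1 hab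
  have hmod : a ≡ b [MOD orderOf g * p] :=
    (Nat.modEq_and_modEq_iff_modEq_mul (ZMod.orderOf_units_coprime g)).1
      ⟨pow_eq_pow_iff_modEq.1 hpow, hmodp⟩
  rw [mul_comm] at hmod
  exact hmod.eq_of_lt_of_lt ha.1 hb.1

theorem isSidon : IsSidon (ruzsaSet p g : Set ℕ) := by
  intro a ha b hb c hc d hd habcd
  have hres : ∀ x ∈ (ruzsaSet p g : Set ℕ), (x : ZMod p) = ((g ^ x : (ZMod p)ˣ) : ZMod p) :=
    fun x hx => (mem_filter.1 hx).2
  have hsum : (a : ZMod p) + b = c + d := by exact_mod_cast congrArg (Nat.cast : ℕ → ZMod p) habcd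
  have hprod : (a : ZMod p) * b = c * d := by
    rw [hres a ha, hres b hb, hres c hc, hres d hd, ← Units.val_mul, ← Units.val_mul, ← pow_add,
      ← pow_add, habcd]
  have hinj := injOn_cast g
  rcases eq_and_eq_or_eq_and_eq_of_add_eq_add_of_mul_eq_mul hsum hprod with ⟨h1, h2⟩ | ⟨h1, h2⟩
  · exact Or.inl ⟨hinj ha hc h1, hinj hb hd h2⟩
  · exact Or.inr ⟨hinj ha hd h1, hinj hb hc h2⟩

theorem lt_of_mem {a : ℕ} (ha : a ∈ ruzsaSet p g) : a < p * orderOf g :=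
  mem_range.1 (mem_filter.1 ha).1

theorem orderOf_le_card : orderOf g ≤ #(ruzsaSet p g) := by
  have hp := (Fact.out : p.Prime)
  let a : ℕ → ℕ := fun i =>
    Nat.chineseRemainder (ZMod.orderOf_units_coprime g) i ((g ^ i : (ZMod p)ˣ) : ZMod p).val
  have ha_order (i : ℕ) : a i ≡ i [MOD orderOf g] := (Nat.chineseRemainder _ _ _).2.1
  have ha_p (i : ℕ) : a i ≡ ((g ^ i : (ZMod p)ˣ) : ZMod p).val [MOD p] :=
    (Nat.chineseRemainder _ _ _).2.2
  calc orderOf g = #(range (orderOf g)) := (card_range _).symm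
    _ ≤ #(ruzsaSet p g) := by
      refine card_le_card_of_injOn a (fun i _ => mem_filter.2 ⟨?_, ?_⟩) fun i hi j hj hij => ?_
      · rw [mem_range, mul_comm]
        exact Nat.chineseRemainder_lt_mul _ _ _ (orderOf_pos g).ne' hp.ne_zero
      · rw [(ZMod.natCast_eq_natCast_iff _ _ p).2 (ha_p i), ZMod.natCast_zmod_val,
          pow_eq_pow_iff_modEq.2 (ha_order i)]
      · have := ((ha_order i).symm.trans (hij ▸ ha_order j))
        exact this.eq_of_lt_of_lt (mem_range.1 hi) (mem_range.1 hj)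

end ruzsaSet

theorem IsSidon.exists_separated_subset {A : Finset ℕ} (hA : IsSidon (A : Set ℕ)) (M : ℕ) :
    ∃ A' ⊆ A, #A - M ≤ #A' ∧ ∀ x ∈ A', ∀ y ∈ A', y < x → y + M < x := by
  set close := (A ×ˢ A).filter fun q => q.1 < q.2 ∧ q.2 ≤ q.1 + M
  have hclose : #close ≤ M := by
    calc #close ≤ #(Icc 1 M) := card_le_card_of_injOn (fun q => q.2 - q.1) ?_ ?_
      _ = M := Nat.card_Icc 1 M
    · intro q hq
      simp only [close, mem_coe, mem_filter] at hq
      simp only [coe_Icc, Set.mem_Icc]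
      omega
    · rintro ⟨a, b⟩ hab ⟨c, d⟩ hcd (h : b - a = d - c)
      simp only [close, mem_coe, mem_filter, mem_product] at hab hcd
      rcases hA b hab.1.2 c hcd.1.1 d hcd.1.2 a hab.1.1 (by omega) with ⟨h1, h2⟩ | ⟨h1, h2⟩
      · simp [h1, h2]
      · omega
  refine ⟨A \ close.image Prod.snd, sdiff_subset, ?_, fun x hx y hy hyx => ?_⟩
  · calc #A - M ≤ #A - #(close.image Prod.snd) := by
          have := card_image_le (s := close) (f := Prod.snd)
          omega
      _ ≤ _ := le_card_sdiff _ _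
  · rw [Finset.mem_sdiff] at hx hy
    by_contra! hxy
    exact hx.2 (mem_image.2 ⟨(y, x), mem_filter.2 ⟨mem_product.2 ⟨hy.1, hx.1⟩, hyx, hxy⟩, rfl⟩)

theorem IsSidon.union_image_add {T A : Set ℕ} {M m c : ℕ} (hT : IsSidon T) (hA : IsSidon A)
    (hTM : ∀ t ∈ T, t ≤ M) (hAm : ∀ a ∈ A, a < m) (hsep : ∀ x ∈ A, ∀ y ∈ A, y < x → y + M < x)
    (hc : 2 * M < c) (hcm : m + M ≤ c) : IsSidon (T ∪ (c + ·) '' A) := by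
  have hmem : ∀ e ∈ T ∪ (c + ·) '' A, (e ∈ T ∧ e ≤ M) ∨ ∃ x ∈ A, x < m ∧ c + x = e := by
    rintro e (he | ⟨x, hx, rfl⟩)
    · exact Or.inl ⟨he, hTM e he⟩
    · exact Or.inr ⟨x, hx, hAm x hx, rfl⟩
  have htrich : ∀ x ∈ A, ∀ y ∈ A, x = y ∨ y + M < x ∨ x + M < y := fun x hx y hy => by
    rcases lt_trichotomy x y with h | h | h
    · exact Or.inr (Or.inr (hsep y hy x hx h))
    · exact Or.inl h
    · exact Or.inr (Or.inl (hsep x hx y hy h))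
  -- Sums from `T + T`, `T + (c + A)` and `(c + A) + (c + A)` lie in `[0, c)`, `[c, 2c)` and
  -- `[2c, ∞)`; a mixed coincidence `t + (c + x) = t' + (c + y)` forces `x = y` by separation.
  intro a ha b hb d hd e he h
  rcases hmem a ha with ⟨ha, ha'⟩ | ⟨x, hx, hx', rfl⟩ <;>
    rcases hmem b hb with ⟨hb, hb'⟩ | ⟨y, hy, hy', rfl⟩ <;>
    rcases hmem d hd with ⟨hd, hd'⟩ | ⟨z, hz, hz', rfl⟩ <;>
    rcases hmem e he with ⟨he, he'⟩ | ⟨w, hw, hw', rfl⟩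
  case inl.inl.inl.inl => exact hT a ha b hb d hd e he h
  case inr.inr.inr.inr =>
    rcases hA x hx y hy z hz w hw (by omega) with ⟨rfl, rfl⟩ | ⟨rfl, rfl⟩ <;> simp
  all_goals first
    | omega
    | (have := htrich x hx z hz; omega)
    | (have := htrich x hx w hw; omega)
    | (have := htrich y hy z hz; omega)
    | (have := htrich y hy w hw; omega)

theorem exists_sidon_extension (T : Finset ℕ) (hT : IsSidon (T : Set ℕ)) (k : ℕ) :
    ∃ p : ℕ, ∃ T' : Finset ℕ, T ⊆ T' ∧ IsSidon (T' : Set ℕ) ∧ (∀ t ∈ T', t ≤ 2 * p ^ 2) ∧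
      k + 1 ≤ p ∧ k * p ≤ (k + 1) * #T' := by
  set M := T.sup id
  have hTM : ∀ t ∈ T, t ≤ M := fun t ht => le_sup (f := id) ht
  obtain ⟨p, hpM, hp⟩ := Nat.exists_infinite_primes ((k + 1) * (M + 1))
  have : Fact p.Prime := ⟨hp⟩
  obtain ⟨g, hg⟩ := IsCyclic.exists_ofOrder_eq_natCard (α := (ZMod p)ˣ)
  rw [Nat.card_eq_fintype_card, ZMod.card_units] at hg
  have hR := ruzsaSet.isSidon g
  obtain ⟨A, hAR, hcardA, hsep⟩ := hR.exists_separated_subset M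
  have hAm : ∀ a ∈ (A : Set ℕ), a < p * (p - 1) := fun a ha => hg ▸ ruzsaSet.lt_of_mem g (hAR ha)
  have hcardR := ruzsaSet.orderOf_le_card g
  have hp2 := hp.two_le
  have hMp : M + 1 ≤ p := le_trans (Nat.le_mul_of_pos_left _ k.succ_pos) hpM
  have hpp : p ^ 2 = p * (p - 1) + p := by
    rw [Nat.mul_sub_one, sq, Nat.sub_add_cancel (Nat.le_mul_self p)]
  refine ⟨p, T ∪ A.image (p ^ 2 + ·), subset_union_left, ?_, ?_, ?_, ?_⟩
  · rw [coe_union, coe_image]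
    exact hT.union_image_add (hR.mono (coe_subset.2 hAR)) hTM hAm hsep (by nlinarith) (by omega)
  · intro t ht
    rcases mem_union.1 ht with ht | ht
    · have := hTM t ht
      nlinarith
    · obtain ⟨a, ha, rfl⟩ := mem_image.1 ht
      have := hAm a ha
      omega
  · nlinarith
  · have hcard : #A ≤ #(T ∪ A.image (p ^ 2 + ·)) :=
      (card_image_of_injective _ (add_right_injective _)).symm.le.trans
        (card_le_card subset_union_right)
    have hsplit : (k + 1) * (p - (M + 1)) + (k + 1) * (M + 1) = (k + 1) * p := by
      rw [← mul_add, Nat.sub_add_cancel hMp]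
    have : p - (M + 1) ≤ #A := by omega
    nlinarith

theorem exists_sidon_chain : ∃ (T : ℕ → Finset ℕ) (p : ℕ → ℕ), Monotone T ∧
    (∀ k, IsSidon (T k : Set ℕ)) ∧
    ∀ k, (∀ t ∈ T k, t ≤ 2 * p k ^ 2) ∧ k + 1 ≤ p k ∧ k * p k ≤ (k + 1) * #(T k) := by
  have step : ∀ (T : {T : Finset ℕ // IsSidon (T : Set ℕ)}) (k : ℕ),
      ∃ q : ℕ × {T : Finset ℕ // IsSidon (T : Set ℕ)}, T.1 ⊆ q.2.1 ∧
        (∀ t ∈ q.2.1, t ≤ 2 * q.1 ^ 2) ∧ k + 1 ≤ q.1 ∧ k * q.1 ≤ (k + 1) * #q.2.1 := by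
    rintro ⟨T, hT⟩ k
    obtain ⟨p, T', hTT', hT', h⟩ := exists_sidon_extension T hT k
    exact ⟨(p, ⟨T', hT'⟩), hTT', h⟩
  choose next hnext using step
  let seq : ℕ → ℕ × {T : Finset ℕ // IsSidon (T : Set ℕ)} := fun k =>
    Nat.rec (next ⟨∅, by simp [IsSidon]⟩ 0) (fun k q => next q.2 (k + 1)) k
  refine ⟨fun k => (seq k).2.1, fun k => (seq k).1,
    monotone_nat_of_le_succ fun k => (hnext (seq k).2 (k + 1)).1, fun k => (seq k).2.2, ?_⟩
  rintro (_ | k)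
  · exact (hnext _ 0).2
  · exact (hnext _ (k + 1)).2

theorem div_sqrt_two_le_cnt_div_sqrt {S : Set ℕ} {r : ℝ} {p : ℕ} (hp : 0 < p)
    (h : r * p ≤ cnt S (2 * p ^ 2)) :
    r / √2 ≤ cnt S (2 * p ^ 2) / √((2 * p ^ 2 : ℕ) : ℝ) := by
  have hp' : (0 : ℝ) < p := by exact_mod_cast hp
  push_cast
  rw [Real.sqrt_mul zero_le_two, Real.sqrt_sq hp'.le, mul_comm √2, ← div_div]
  gcongr
  rwa [le_div_iff₀ hp']

theorem stmt19 :
    ∃ S : Set ℕ, S.Infinite ∧ (∀ n, Rf S n ≤ 2) ∧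
      limsup (fun n : ℕ => (((cnt S n : ℝ) / Real.sqrt n : ℝ) : EReal)) atTop
        ≥ ((1 / Real.sqrt 2 : ℝ) : EReal) := by
  obtain ⟨T, p, hmono, hsidon, hT⟩ := exists_sidon_chain
  set S := ⋃ k, (T k : Set ℕ)
  have hTS (k : ℕ) : (T k : Set ℕ) ⊆ S := Set.subset_iUnion (fun k => (T k : Set ℕ)) k
  have hS : IsSidon S := IsSidon.iUnion_of_monotone (fun _ _ h => coe_subset.2 (hmono h)) hsidon
  have hcnt (k : ℕ) : ((k : ℝ) / (k + 1)) * p k ≤ cnt S (2 * p k ^ 2) := by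
    obtain ⟨hbound, -, hcard⟩ := hT k
    calc ((k : ℝ) / (k + 1)) * p k ≤ #(T k) := by
          rw [div_mul_eq_mul_div, div_le_iff₀ (by positivity)]
          exact_mod_cast (mul_comm (#(T k)) (k + 1)) ▸ hcard
      _ ≤ cnt S (2 * p k ^ 2) := by exact_mod_cast card_le_cnt (hTS k) hbound
  refine ⟨S, Set.infinite_of_le_card_finset T hTS fun k => ?_, hS.rf_le_two, ?_⟩
  · obtain ⟨-, hp, hcard⟩ := hT k
    nlinarith
  refine le_limsup_of_tendsto_of_le_comp (N := fun k => 2 * p k ^ 2)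
    (v := fun k => (((k : ℝ) / (k + 1) / √2 : ℝ) : EReal)) ?_ ?_ fun k => ?_
  · exact tendsto_atTop_mono (fun k => show k ≤ 2 * p k ^ 2 by nlinarith [(hT k).2.1]) tendsto_id
  · exact (continuous_coe_real_ereal.tendsto _).comp
      ((tendsto_natCast_div_add_atTop (1 : ℝ)).div_const _)
  · exact EReal.coe_le_coe_iff.2 (div_sqrt_two_le_cnt_div_sqrt (by linarith [(hT k).2.1]) (hcnt k))
end
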